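/- Let j, k ∈ {1,2,3} with j ≠ k, and let 𝔲 be a nonempty word whose last letter is j and such that, if 𝔲 has length at least 2, its second-to-last letter is not k. Then s_𝔲(α_j) + s_𝔲(α_k) ≥ 0 componentwise. -/

import Mathlib

open MvPolynomial

noncomputable section

abbrev Vec3 := Fin 3 → ℤ

/-- The symmetric Cartan matrix entries determined by `c12, c13, c23`. -/
def cart (c12 c13 c23 : ℤ) (p q : Fin 3) : ℤ :=
  if p = q then 2
  else if (p = 0 ∧ q = 1) ∨ (p = 1 ∧ q = 0) then -c12
  else if (p = 0 ∧ q = 2) ∨ (p = 2 ∧ q = 0) then -c13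
  else -c23

/-- Off-diagonal positive entries `c_pq`. -/
def cOf (c12 c13 c23 : ℤ) (p q : Fin 3) : ℤ :=
  if (p = 0 ∧ q = 1) ∨ (p = 1 ∧ q = 0) then c12
  else if (p = 0 ∧ q = 2) ∨ (p = 2 ∧ q = 0) then c13
  else c23

/-- standard basis vectors α_p of ℤ^3 -/
def alpha (p : Fin 3) : Vec3 := Pi.single p 1

/-- the symmetric bilinear form with (α_p, α_q) given by the Cartan matrix -/
def bform (c12 c13 c23 : ℤ) (v w : Vec3) : ℤ :=
  ∑ p, ∑ q, v p * cart c12 c13 c23 p q * w q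

/-- simple reflection s_p -/
def srefl (c12 c13 c23 : ℤ) (p : Fin 3) (v : Vec3) : Vec3 :=
  v - (bform c12 c13 c23 v (alpha p)) • alpha p

/-- s_𝔴 for a word 𝔴 = i₁⋯i_k : the composite s_{i₁}∘⋯∘s_{i_k} -/
def sWord (c12 c13 c23 : ℤ) (w : List (Fin 3)) (v : Vec3) : Vec3 :=
  w.foldr (fun p u => srefl c12 c13 c23 p u) v

open Fin.NatCast in
/-- a word is acyclic if it is a prefix of 123123⋯ (letters 0,1,2 here) or of 321321⋯ -/
def Acyclic (w : List (Fin 3)) : Prop :=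
  (∀ t < w.length, w.getD t 0 = (t : Fin 3)) ∨
  (∀ t < w.length, w.getD t 0 = -((t : Fin 3) + 1))

/-- the length of the longest acyclic prefix -/
def rho (w : List (Fin 3)) : ℕ :=
  @Nat.findGreatest (fun p => Acyclic (w.take p)) (Classical.decPred _) w.length

/-- initial exchange matrix -/
def B0 (c12 c13 c23 : ℤ) : Matrix (Fin 3) (Fin 3) ℤ :=
  !![0, c12, c13; -c12, 0, c23; -c13, -c23, 0]

/-- matrix mutation μ_k -/
def mutMat (k : Fin 3) (b : Matrix (Fin 3) (Fin 3) ℤ) : Matrix (Fin 3) (Fin 3) ℤ :=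
  Matrix.of fun p q =>
    if p = k ∨ q = k then - b p q
    else b p q + (b p k).sign * max (b p k * b k q) 0

/-- mutated exchange matrix B(𝔴) -/
def BW (c12 c13 c23 : ℤ) (w : List (Fin 3)) : Matrix (Fin 3) (Fin 3) ℤ :=
  w.foldl (fun m k => mutMat k m) (B0 c12 c13 c23)

/-- c_pq(𝔴) = |b_pq(𝔴)| -/
def cW (c12 c13 c23 : ℤ) (w : List (Fin 3)) (p q : Fin 3) : ℤ :=
  |BW c12 c13 c23 w p q|

/-- the ambient field F, the fraction field of ℚ[x₁,x₂,x₃] -/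
abbrev FF := FractionRing (MvPolynomial (Fin 3) ℚ)

/-- the initial cluster variables x_p inside F -/
def xv (p : Fin 3) : FF := algebraMap (MvPolynomial (Fin 3) ℚ) FF (X p)

/-- seed mutation on the cluster -/
def mutClus (k : Fin 3) (b : Matrix (Fin 3) (Fin 3) ℤ) (z : Fin 3 → FF) : Fin 3 → FF :=
  fun p =>
    if p = k then
      ((∏ q, z q ^ (max (b q k) 0).toNat) + (∏ q, z q ^ (max (-(b q k)) 0).toNat)) / z k
    else z p

/-- seed mutation -/
def mutSeed (s : Matrix (Fin 3) (Fin 3) ℤ × (Fin 3 → FF)) (k : Fin 3) :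
    Matrix (Fin 3) (Fin 3) ℤ × (Fin 3 → FF) :=
  (mutMat k s.1, mutClus k s.1 s.2)

/-- the seed Ξ(𝔴) obtained from the initial seed by mutating along 𝔴 -/
def Xi (c12 c13 c23 : ℤ) (w : List (Fin 3)) : Matrix (Fin 3) (Fin 3) ℤ × (Fin 3 → FF) :=
  w.foldl mutSeed (B0 c12 c13 c23, xv)

open Classical in
/-- the order of vanishing of z ∈ F at the prime x_q : the unique m with
    z = x_q^m · f/g, f,g prime to x_q (0 if no such m, e.g. z = 0). -/
def ordAt (q : Fin 3) (z : FF) : ℤ :=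
  if h : ∃ m : ℤ, ∃ f g : MvPolynomial (Fin 3) ℚ, ¬ (X q ∣ f) ∧ ¬ (X q ∣ g) ∧ g ≠ 0 ∧
      z = (xv q) ^ m * (algebraMap (MvPolynomial (Fin 3) ℚ) FF f) /
            (algebraMap (MvPolynomial (Fin 3) ℚ) FF g)
  then h.choose else 0

/-- the denominator vector β_p(𝔴) of the p-th cluster variable of Ξ(𝔴) -/
def betaP (c12 c13 c23 : ℤ) (w : List (Fin 3)) (p : Fin 3) : Vec3 :=
  fun q => - ordAt q ((Xi c12 c13 c23 w).2 p)

abbrev V2 := ℤ × ℤ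

def Vbase (p : Fin 3) : V2 × V2 × V2 :=
  if p = 0 then ((-1,2), (-1,1), (0,1))
  else if p = 1 then ((0,1), (1,1), (1,0))
  else ((1,0), (1,-1), (2,-1))

def Vstep (t : V2 × V2 × V2) (p : Fin 3) : V2 × V2 × V2 :=
  if p = 0 then (t.2.1 + t.2.2, t.2.1, t.2.2)
  else if p = 1 then (t.1, t.1 + t.2.2, t.2.2)
  else (t.1, t.2.1, t.1 + t.2.1)

/-- the triple V(𝔴) = (v₁(𝔴), v₂(𝔴), v₃(𝔴)) -/
def VW : List (Fin 3) → V2 × V2 × V2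
  | [] => ((0,0),(0,0),(0,0))
  | i :: r => r.foldl Vstep (Vbase i)

/-- the component v_p(𝔴) of V(𝔴) -/
def vComp (p : Fin 3) (t : V2 × V2 × V2) : V2 :=
  if p = 0 then t.1 else if p = 1 then t.2.1 else t.2.2

/-- (b,c) is generic: b ≠ 0, c ≠ 0, b + c ≠ 0 -/
def Generic (v : V2) : Prop := v.1 ≠ 0 ∧ v.2 ≠ 0 ∧ v.1 + v.2 ≠ 0

/-- (b,c) is primitive: gcd(|b|,|c|) = 1 -/
def Primitive (v : V2) : Prop := Int.gcd v.1 v.2 = 1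

/-- the crossing times ℓ/|n|, ℓ = 1, …, |n|-1, tagged with a letter -/
def marks (n : ℤ) (letter : Fin 3) : List (ℚ × Fin 3) :=
  ((List.range n.natAbs).drop 1).map (fun ℓ => ((ℓ : ℚ) / (n.natAbs : ℚ), letter))

/-- the crossing word υ(b,c) of the segment from (0,0) to (b,c) : letters recorded at
    the crossings with the lines y ∈ ℤ (letter 1), x+y ∈ ℤ (letter 2), x ∈ ℤ (letter 3),
    listed in increasing order of the time parameter. -/
def upsWord (b c : ℤ) : List (Fin 3) :=
  ((marks c 0 ++ marks (b + c) 1 ++ marks b 2).mergeSort (fun s t => s.1 ≤ t.1)).map Prod.snd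

/-- β(b,c) = s_{j₁}⋯s_{j_h}(α_{j_{h+1}}) where υ(b,c) = j₁⋯j_{2h+1} -/
def betaVec (c12 c13 c23 : ℤ) (v : V2) : Vec3 :=
  sWord c12 c13 c23 ((upsWord v.1 v.2).take ((upsWord v.1 v.2).length / 2))
    (alpha ((upsWord v.1 v.2).getD ((upsWord v.1 v.2).length / 2) 0))

/-- φ(𝔳) = β(v_p(𝔳)) where p is the last letter of 𝔳 -/
def phi (c12 c13 c23 : ℤ) (w : List (Fin 3)) : Vec3 :=
  betaVec c12 c13 c23 (vComp (w.getLastD 0) (VW w))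

/-- ψ(ŵ), where ŵ = 𝔴𝔳 with 𝔴 the longest acyclic prefix of ŵ -/
def psi (c12 c13 c23 : ℤ) (w : List (Fin 3)) : Vec3 :=
  if w.drop (rho w) = [] then
    sWord c12 c13 c23 (w.take (rho w)).dropLast (alpha ((w.take (rho w)).getLastD 0))
  else
    sWord c12 c13 c23 (w.take (rho w)) (phi c12 c13 c23 (w.drop (rho w)))


/-- the word (ab)^n : n copies of the two-letter word ab -/
def rep2 (a b : Fin 3) (n : ℕ) : List (Fin 3) := (List.replicate n [a, b]).flatten

/-! Let `w` be a word that may be followed by the letter `q`. By induction on `w`, both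
`s_w(α_q)` and `s_w(α_p) + s_w(α_q)` (for every `p`) are nonnegative: appending a letter `l`
replaces `s_w(α_p)` by `s_w(α_p) + c_pl s_w(α_l)` and `s_w(α_l)` by `-s_w(α_l)`, and since
`c_pl = -cart p l ≥ 2` the surplus `(c_pl - 2) s_w(α_l)` absorbs the sign change. For `𝔲 = w j` this gives
`s_𝔲(α_k) + s_𝔲(α_j) = (s_w(α_k) + s_w(α_j)) + (c_kj - 2) s_w(α_j) ≥ 0`. -/

section Reflections

variable (c12 c13 c23 : ℤ)

lemma bform_add_left (v v' w : Vec3) :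
    bform c12 c13 c23 (v + v') w = bform c12 c13 c23 v w + bform c12 c13 c23 v' w := by
  simp only [bform, Pi.add_apply, add_mul, Finset.sum_add_distrib]

lemma bform_alpha_alpha (p q : Fin 3) :
    bform c12 c13 c23 (alpha p) (alpha q) = cart c12 c13 c23 p q := by
  simp [bform, alpha, Pi.single_apply]

lemma srefl_add (p : Fin 3) (v v' : Vec3) :
    srefl c12 c13 c23 p (v + v') = srefl c12 c13 c23 p v + srefl c12 c13 c23 p v' := by
  simp only [srefl, bform_add_left, add_smul]
  abel

lemma srefl_alpha_self (p : Fin 3) : srefl c12 c13 c23 p (alpha p) = -alpha p := by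
  rw [srefl, bform_alpha_alpha, show cart c12 c13 c23 p p = 2 by simp [cart]]
  module

lemma srefl_alpha (p q : Fin 3) :
    srefl c12 c13 c23 q (alpha p) = alpha p - cart c12 c13 c23 p q • alpha q := by
  rw [srefl, bform_alpha_alpha]

lemma sWord_add (w : List (Fin 3)) (v v' : Vec3) :
    sWord c12 c13 c23 w (v + v') = sWord c12 c13 c23 w v + sWord c12 c13 c23 w v' := by
  induction w with
  | nil => rfl
  | cons a w ih => exact (congrArg _ ih).trans (srefl_add c12 c13 c23 a _ _)

def sWordHom (w : List (Fin 3)) : Vec3 →+ Vec3 :=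
  AddMonoidHom.mk' (sWord c12 c13 c23 w) (sWord_add c12 c13 c23 w)

lemma sWord_append_singleton (w : List (Fin 3)) (q : Fin 3) (v : Vec3) :
    sWord c12 c13 c23 (w ++ [q]) v = sWord c12 c13 c23 w (srefl c12 c13 c23 q v) := by
  simp [sWord, List.foldr_append]

lemma sWord_append_alpha_self (w : List (Fin 3)) (q : Fin 3) :
    sWord c12 c13 c23 (w ++ [q]) (alpha q) = -sWord c12 c13 c23 w (alpha q) := by
  rw [sWord_append_singleton, srefl_alpha_self]
  exact map_neg (sWordHom c12 c13 c23 w) _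

lemma sWord_append_alpha (w : List (Fin 3)) (p q : Fin 3) :
    sWord c12 c13 c23 (w ++ [q]) (alpha p) =
      sWord c12 c13 c23 w (alpha p) - cart c12 c13 c23 p q • sWord c12 c13 c23 w (alpha q) := by
  rw [sWord_append_singleton, srefl_alpha]
  exact (map_sub (sWordHom c12 c13 c23 w) _ _).trans
    (congrArg _ (map_zsmul (sWordHom c12 c13 c23 w) _ _))

end Reflections

def ReflPositive (c12 c13 c23 : ℤ) (w : List (Fin 3)) (q : Fin 3) : Prop :=
  0 ≤ sWord c12 c13 c23 w (alpha q) ∧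
    ∀ p, 0 ≤ sWord c12 c13 c23 w (alpha p) + sWord c12 c13 c23 w (alpha q)

namespace ReflPositive

variable {c12 c13 c23 : ℤ} {w : List (Fin 3)} {l : Fin 3}

lemma nil (q : Fin 3) : ReflPositive c12 c13 c23 [] q := by
  have hα : ∀ p, 0 ≤ alpha p := fun p i => by
    simp only [alpha, Pi.single_apply, Pi.zero_apply]
    split <;> norm_num
  exact ⟨hα q, fun p => add_nonneg (hα p) (hα q)⟩

lemma add_nonneg_append (h : ReflPositive c12 c13 c23 w l) {p : Fin 3}
    (hcart : cart c12 c13 c23 p l ≤ -2) :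
    0 ≤ sWord c12 c13 c23 (w ++ [l]) (alpha p) + sWord c12 c13 c23 (w ++ [l]) (alpha l) := by
  rw [sWord_append_alpha, sWord_append_alpha_self]
  set x := sWord c12 c13 c23 w (alpha l)
  calc (0 : Vec3) ≤ (sWord c12 c13 c23 w (alpha p) + x) + (-cart c12 c13 c23 p l - 2) • x :=
        add_nonneg (h.2 p) (smul_nonneg (by omega) h.1)
    _ = _ := by module

lemma nonneg_append (h : ReflPositive c12 c13 c23 w l) {p : Fin 3}
    (hcart : cart c12 c13 c23 p l ≤ -2) :
    0 ≤ sWord c12 c13 c23 (w ++ [l]) (alpha p) := by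
  have hl : sWord c12 c13 c23 (w ++ [l]) (alpha l) ≤ 0 := by
    rw [sWord_append_alpha_self]
    exact neg_nonpos.mpr h.1
  exact (h.add_nonneg_append hcart).trans (add_le_of_nonpos_right hl)

lemma append (h : ReflPositive c12 c13 c23 w l) (hcart : ∀ p, p ≠ l → cart c12 c13 c23 p l ≤ -2)
    {q : Fin 3} (hql : q ≠ l) : ReflPositive c12 c13 c23 (w ++ [l]) q := by
  refine ⟨h.nonneg_append (hcart q hql), fun p => ?_⟩
  rcases eq_or_ne p l with rfl | hpl
  · rw [add_comm]
    exact h.add_nonneg_append (hcart q hql)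
  · exact add_nonneg (h.nonneg_append (hcart p hpl)) (h.nonneg_append (hcart q hql))

lemma of_isChain (hcart : ∀ p q, p ≠ q → cart c12 c13 c23 p q ≤ -2) {q : Fin 3}
    (hw : (w ++ [q]).IsChain (· ≠ ·)) : ReflPositive c12 c13 c23 w q := by
  induction w using List.reverseRecOn generalizing q with
  | nil => exact nil q
  | append_singleton w l ih =>
    obtain ⟨hwl, -, hlq⟩ := List.isChain_append.mp hw
    exact (ih hwl).append (hcart · l) (hlq l (by simp) q rfl).symm

end ReflPositive

lemma cart_le_neg_two {c12 c13 c23 : ℤ} (h12 : 2 ≤ c12) (h13 : 2 ≤ c13) (h23 : 2 ≤ c23)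
    {p q : Fin 3} (hpq : p ≠ q) : cart c12 c13 c23 p q ≤ -2 := by
  fin_cases p <;> fin_cases q <;> simp_all [cart]

theorem stmt14_general (c12 c13 c23 : ℤ) (h12 : 2 ≤ c12) (h13 : 2 ≤ c13) (h23 : 2 ≤ c23)
    (j k : Fin 3) (hjk : j ≠ k)
    (u : List (Fin 3)) (hu : u.Chain' (· ≠ ·)) (hne : u ≠ [])
    (hlast : u.getLast hne = j) :
    0 ≤ sWord c12 c13 c23 u (alpha j) + sWord c12 c13 c23 u (alpha k) := by
  have hu' : u = u.dropLast ++ [j] := hlast ▸ (List.dropLast_append_getLast hne).symm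
  have hpos : ReflPositive c12 c13 c23 u.dropLast j :=
    .of_isChain (fun p q => cart_le_neg_two h12 h13 h23) (hu' ▸ hu)
  rw [hu', add_comm]
  exact hpos.add_nonneg_append (cart_le_neg_two h12 h13 h23 hjk.symm)

theorem stmt14 (c12 c13 c23 : ℤ) (h12 : 2 ≤ c12) (h13 : 2 ≤ c13) (h23 : 2 ≤ c23)
    (j k : Fin 3) (hjk : j ≠ k)
    (u : List (Fin 3)) (hu : u.Chain' (· ≠ ·)) (hne : u ≠ [])
    (hlast : u.getLast hne = j)
    (h2nd : 2 ≤ u.length → u.getD (u.length - 2) 0 ≠ k) :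
    0 ≤ sWord c12 c13 c23 u (alpha j) + sWord c12 c13 c23 u (alpha k) :=
  stmt14_general c12 c13 c23 h12 h13 h23 j k hjk u hu hne hlast

end
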